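/- Let X be an n-poised set and let A ∈ X have a fundamental polynomial that is a product of n linear factors. Then each of these n lines passes through at least two nodes of X that do not lie on any of the other n−1 lines. -/
import Mathlib


open MvPolynomial

noncomputable section
open scoped Classical

/-- Bivariate real polynomials. -/
abbrev Poly2 := MvPolynomial (Fin 2) ℝ

/-- Evaluation of a bivariate polynomial at a point of the plane. -/
def evalPt (A : Fin 2 → ℝ) (p : Poly2) : ℝ := MvPolynomial.eval A p

/-- A line is (identified with) a polynomial of total degree 1. -/
def IsLine (ℓ : Poly2) : Prop := ℓ.totalDegree = 1

/-- `X` is `n`-poised: unique interpolation from Π_n at the nodes of `X`. -/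
def Poised (n : ℕ) (X : Finset (Fin 2 → ℝ)) : Prop :=
  ∀ c : (Fin 2 → ℝ) → ℝ,
    ∃! p : Poly2, p.totalDegree ≤ n ∧ ∀ A ∈ X, evalPt A p = c A

/-- `p` is an `n`-fundamental polynomial of the node `A` of `X`. -/
def IsFund (n : ℕ) (X : Finset (Fin 2 → ℝ)) (A : Fin 2 → ℝ) (p : Poly2) : Prop :=
  p.totalDegree ≤ n ∧ evalPt A p = 1 ∧ ∀ B ∈ X, B ≠ A → evalPt B p = 0

/-- A `GC_n`-set: an `n`-poised set all of whose nodes have fundamental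
polynomials that are products of `n` linear factors. -/
def GCSet (n : ℕ) (X : Finset (Fin 2 → ℝ)) : Prop :=
  Poised n X ∧
    ∀ A ∈ X, ∃ f : Fin n → Poly2, (∀ i, IsLine (f i)) ∧ IsFund n X A (∏ i, f i)

/-- The node `A` uses the line `ℓ`: `ℓ` divides a fundamental polynomial of `A`. -/
def Uses (n : ℕ) (X : Finset (Fin 2 → ℝ)) (A : Fin 2 → ℝ) (ℓ : Poly2) : Prop :=
  ∃ p, IsFund n X A p ∧ ℓ ∣ p

/-- The nodes of `X` lying on the line `ℓ`. -/
def nodesOn (X : Finset (Fin 2 → ℝ)) (ℓ : Poly2) : Finset (Fin 2 → ℝ) :=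
  X.filter (fun A => evalPt A ℓ = 0)

/-- `X` contains no 5 collinear nodes. -/
def NoFiveCollinear (X : Finset (Fin 2 → ℝ)) : Prop :=
  ∀ ℓ : Poly2, IsLine ℓ → (nodesOn X ℓ).card ≤ 4

lemma uniq_interp {n : ℕ} {X : Finset (Fin 2 → ℝ)} (hX : Poised n X)
    {A : Fin 2 → ℝ} {p q : Poly2}
    (hp : p.totalDegree ≤ n) (hpA : evalPt A p = 1)
    (hp0 : ∀ B ∈ X, B ≠ A → evalPt B p = 0)
    (hq : q.totalDegree ≤ n) (hqA : evalPt A q = 1)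
    (hq0 : ∀ B ∈ X, B ≠ A → evalPt B q = 0) : p = q := by
  obtain ⟨r, -, hr⟩ := hX (fun B => if B = A then 1 else 0)
  have h1 : p = r := hr p ⟨hp, fun B hB => by
    by_cases h : B = A
    · simp [h, hpA]
    · simp [h, hp0 B hB h]⟩
  have h2 : q = r := hr q ⟨hq, fun B hB => by
    by_cases h : B = A
    · simp [h, hqA]
    · simp [h, hq0 B hB h]⟩
  rw [h1, h2]

-- a linear affine polynomial
def linP (a0 a1 c : ℝ) : Poly2 := C a0 * X 0 + C a1 * X 1 + C c

lemma evalPt_linP (P : Fin 2 → ℝ) (a0 a1 c : ℝ) :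
    evalPt P (linP a0 a1 c) = a0 * P 0 + a1 * P 1 + c := by
  simp [evalPt, linP]

lemma evalPt_mul (P : Fin 2 → ℝ) (p q : Poly2) :
    evalPt P (p * q) = evalPt P p * evalPt P q := by simp [evalPt]

lemma evalPt_C (P : Fin 2 → ℝ) (c : ℝ) : evalPt P (C c) = c := by simp [evalPt]

lemma linP_deg (a0 a1 c : ℝ) : (linP a0 a1 c).totalDegree ≤ 1 := by
  refine (totalDegree_add _ _).trans (max_le ?_ (by simp [totalDegree_C]))
  refine (totalDegree_add _ _).trans (max_le ?_ ?_) <;>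
  · refine (totalDegree_mul _ _).trans ?_
    simp [totalDegree_C, totalDegree_X]

theorem stmt14' (n : ℕ) (X : Finset (Fin 2 → ℝ)) (hX : Poised n X)
    (A : Fin 2 → ℝ) (hA : A ∈ X)
    (f : Fin n → Poly2) (hf : ∀ i, IsLine (f i))
    (hfund : IsFund n X A (∏ i, f i)) :
    ∀ i, ∃ B C, B ∈ X ∧ C ∈ X ∧ B ≠ C ∧
      evalPt B (f i) = 0 ∧ evalPt C (f i) = 0 ∧
      (∀ j, j ≠ i → evalPt B (f j) ≠ 0) ∧ (∀ j, j ≠ i → evalPt C (f j) ≠ 0) := by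
  intro i
  have hn : 1 ≤ n := i.pos
  obtain ⟨hdeg, hA1, h0⟩ := hfund
  set r : Poly2 := ∏ j ∈ Finset.univ.erase i, f j with hr_def
  have hsplit : f i * r = ∏ j, f j := Finset.mul_prod_erase _ _ (Finset.mem_univ i)
  -- evaluation of r
  have hr_eval : ∀ P, evalPt P r = ∏ j ∈ Finset.univ.erase i, evalPt P (f j) := by
    intro P; simp [evalPt, hr_def, map_prod]
  have hprod_eval : ∀ P, evalPt P (f i) * evalPt P r = evalPt P (∏ j, f j) := by
    intro P; rw [← hsplit]; simp [evalPt, map_mul]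
  have hA_mul : evalPt A (f i) * evalPt A r = 1 := by rw [hprod_eval]; exact hA1
  have hfiA : evalPt A (f i) ≠ 0 := left_ne_zero_of_mul_eq_one hA_mul
  have hrA : evalPt A r ≠ 0 := right_ne_zero_of_mul_eq_one hA_mul
  have hr0 : r ≠ 0 := fun h => hrA (by simp [evalPt, h])
  -- degree of r
  have hdr : r.totalDegree ≤ n - 1 := by
    refine (totalDegree_finset_prod _ _).trans ?_
    have : ∑ j ∈ Finset.univ.erase i, (f j).totalDegree
        = ∑ j ∈ Finset.univ.erase i, 1 :=
      Finset.sum_congr rfl (fun j _ => hf j)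
    rw [this, Finset.sum_const, smul_eq_mul, mul_one,
      Finset.card_erase_of_mem (Finset.mem_univ i), Finset.card_univ, Fintype.card_fin]
  -- r vanishes iff some other line vanishes
  have hr_zero_iff : ∀ P, evalPt P r = 0 ↔ ∃ j, j ≠ i ∧ evalPt P (f j) = 0 := by
    intro P
    rw [hr_eval, Finset.prod_eq_zero_iff]
    constructor
    · rintro ⟨j, hj, hz⟩; exact ⟨j, (Finset.mem_erase.mp hj).1, hz⟩
    · rintro ⟨j, hj, hz⟩; exact ⟨j, Finset.mem_erase.mpr ⟨hj, Finset.mem_univ j⟩, hz⟩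
  -- dichotomy on X \ {A}
  have hdich : ∀ B ∈ X, B ≠ A → evalPt B (f i) = 0 ∨ evalPt B r = 0 := by
    intro B hB hBA
    have := hprod_eval B
    rw [h0 B hB hBA] at this
    exact mul_eq_zero.mp this
  by_contra hcon
  push_neg at hcon
  -- key: any low-degree poly vanishing on all exclusive nodes, nonzero at A, is prop. to f i
  have key : ∀ g : Poly2, g.totalDegree ≤ 1 → evalPt A g ≠ 0 →
      (∀ B ∈ X, B ≠ A → evalPt B (f i) = 0 → (∀ j, j ≠ i → evalPt B (f j) ≠ 0) →
        evalPt B g = 0) →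
      f i = C (evalPt A g * evalPt A r)⁻¹ * g := by
    intro g hg hgA hgv
    set d : ℝ := (evalPt A g * evalPt A r)⁻¹ with hd
    set q : Poly2 := C d * g * r with hq_def
    have hq_eval : ∀ P, evalPt P q = d * evalPt P g * evalPt P r := by
      intro P; simp [evalPt, hq_def, map_mul]
    have hqdeg : q.totalDegree ≤ n := by
      refine (totalDegree_mul _ _).trans ?_
      have h1 : (C d * g).totalDegree ≤ 1 :=
        (totalDegree_mul _ _).trans (by simpa [totalDegree_C] using hg)
      have := add_le_add h1 hdr
      omega
    have hqA : evalPt A q = 1 := by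
      rw [hq_eval, hd, mul_assoc]
      exact inv_mul_cancel₀ (mul_ne_zero hgA hrA)
    have hq0 : ∀ B ∈ X, B ≠ A → evalPt B q = 0 := by
      intro B hB hBA
      rw [hq_eval]
      rcases hdich B hB hBA with h | h
      · by_cases hrB : evalPt B r = 0
        · rw [hrB]; ring
        · have hexcl : ∀ j, j ≠ i → evalPt B (f j) ≠ 0 := by
            intro j hj hz
            exact hrB ((hr_zero_iff B).mpr ⟨j, hj, hz⟩)
          rw [hgv B hB hBA h hexcl]; ring
      · rw [h]; ring
    have hpq : (∏ j, f j) = q := uniq_interp hX hdeg hA1 h0 hqdeg hqA hq0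
    rw [← hsplit, hq_def] at hpq
    exact mul_right_cancel₀ hr0 hpq
  -- case analysis on existence of an exclusive node
  by_cases hS : ∃ B, B ∈ X ∧ B ≠ A ∧ evalPt B (f i) = 0 ∧ ∀ j, j ≠ i → evalPt B (f j) ≠ 0
  · obtain ⟨B, hB, hBA, hBi, hBex⟩ := hS
    -- all exclusive nodes equal B
    have huniq : ∀ C ∈ X, C ≠ A → evalPt C (f i) = 0 →
        (∀ j, j ≠ i → evalPt C (f j) ≠ 0) → C = B := by
      intro C hC hCA hCi hCex
      by_contra hCB
      obtain ⟨j, hj, hz⟩ := hcon B C hB hC (fun h => hCB h.symm) hBi hCi hBex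
      exact hCex j hj hz
    -- A ≠ B so u := A - B ≠ 0
    have hfiB : evalPt B (f i) = 0 := hBi
    set u0 : ℝ := A 0 - B 0
    set u1 : ℝ := A 1 - B 1
    have hu : u0 ≠ 0 ∨ u1 ≠ 0 := by
      by_contra h
      push_neg at h
      have hAB : A = B := by
        funext k
        fin_cases k
        · show A 0 = B 0
          have := h.1; simp only [u0, sub_eq_zero] at this; exact this
        · show A 1 = B 1
          have := h.2; simp only [u1, sub_eq_zero] at this; exact this
      rw [hAB] at hfiA; exact hfiA hfiB
    have hs : u0 ^ 2 + u1 ^ 2 ≠ 0 := by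
      rcases hu with h | h <;> positivity
    -- two lines through B
    set g1 : Poly2 := linP u0 u1 (-(u0 * B 0 + u1 * B 1)) with hg1
    set g2 : Poly2 := linP (u0 - u1) (u1 + u0) (-((u0 - u1) * B 0 + (u1 + u0) * B 1)) with hg2
    have hg1A : evalPt A g1 = u0 ^ 2 + u1 ^ 2 := by rw [hg1, evalPt_linP]; ring
    have hg2A : evalPt A g2 = u0 ^ 2 + u1 ^ 2 := by rw [hg2, evalPt_linP]; ring
    have hg1B : evalPt B g1 = 0 := by rw [hg1, evalPt_linP]; ring
    have hg2B : evalPt B g2 = 0 := by rw [hg2, evalPt_linP]; ring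
    have hgv : ∀ g : Poly2, evalPt B g = 0 →
        (∀ C ∈ X, C ≠ A → evalPt C (f i) = 0 → (∀ j, j ≠ i → evalPt C (f j) ≠ 0) →
          evalPt C g = 0) := by
      intro g hgB C hC hCA hCi hCex
      rw [huniq C hC hCA hCi hCex]; exact hgB
    have k1 := key g1 (linP_deg _ _ _) (by rw [hg1A]; exact hs) (hgv g1 hg1B)
    have k2 := key g2 (linP_deg _ _ _) (by rw [hg2A]; exact hs) (hgv g2 hg2B)
    -- evaluate both at P = B + (−u1, u0)
    set P : Fin 2 → ℝ := ![B 0 - u1, B 1 + u0] with hP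
    have hg1P : evalPt P g1 = 0 := by
      rw [hg1, evalPt_linP]; simp [hP]; ring
    have hg2P : evalPt P g2 = u0 ^ 2 + u1 ^ 2 := by
      rw [hg2, evalPt_linP]; simp [hP]; ring
    have e1 : evalPt P (f i) = 0 := by
      rw [k1, evalPt_mul, hg1P, mul_zero]
    have e2 : evalPt P (f i) ≠ 0 := by
      rw [k2, evalPt_mul, evalPt_C, hg2P, hg2A]
      exact mul_ne_zero (inv_ne_zero (mul_ne_zero hs hrA)) hs
    exact e2 e1
  · -- no exclusive node: then r itself (normalized) interpolates delta at A
    push_neg at hS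
    have k := key 1 (by simp) (by simp [evalPt]) ?_
    · -- f i = C const, contradicting totalDegree = 1
      have hline := hf i
      rw [IsLine, k, mul_one, totalDegree_C] at hline
      simp at hline
    · intro B hB hBA hBi hBex
      exact absurd hBex (by simpa using hS B hB hBA hBi)

/-- If a node of an `n`-poised set has a fundamental polynomial that is a
product of `n` linear factors, then each of the `n` lines passes through at
least two nodes of `X` lying on none of the other lines. -/
theorem stmt14 (n : ℕ) (X : Finset (Fin 2 → ℝ)) (hX : Poised n X)
    (A : Fin 2 → ℝ) (hA : A ∈ X)
    (f : Fin n → Poly2) (hf : ∀ i, IsLine (f i))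
    (hfund : IsFund n X A (∏ i, f i)) :
    ∀ i, ∃ B C, B ∈ X ∧ C ∈ X ∧ B ≠ C ∧
      evalPt B (f i) = 0 ∧ evalPt C (f i) = 0 ∧
      (∀ j, j ≠ i → evalPt B (f j) ≠ 0) ∧ (∀ j, j ≠ i → evalPt C (f j) ≠ 0) :=
  stmt14' n X hX A hA f hf hfund
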